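/- arXiv:1207.0928 — 6 statements merged into one kernel-verified Lean document; each statement's English description precedes it below -/
import Mathlib

section
/- Let φ : [0,1] → ℝ be convex. Then (1/2)(φ(1/4) + φ(3/4)) ≤ ∫_0^1 φ(t) dt ≤ (1/2)(φ(1/2) + (φ(0)+φ(1))/2). -/
/-!
Both inequalities are the classical Hermite–Hadamard bounds
`(b - a) φ((a + b) / 2) ≤ ∫ₐᵇ φ ≤ (b - a) (φ a + φ b) / 2`, applied on `[0, 1/2]` and on `[1/2, 1]`.
Each follows by pairing `x` with its reflection `a + b - x`: convexity gives
`2 φ((a + b) / 2) ≤ φ x + φ (a + b - x) ≤ φ a + φ b`, and the reflection preserves `∫ₐᵇ φ`.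
-/

open MeasureTheory Set intervalIntegral

section Reflect

variable {f : ℝ → ℝ} {a b : ℝ}

lemma IntervalIntegrable.comp_reflect (hf : IntervalIntegrable f volume a b) :
    IntervalIntegrable (fun x ↦ f (a + b - x)) volume a b := by
  simpa using (hf.comp_sub_left (a + b)).symm

lemma intervalIntegral.integral_comp_reflect :
    ∫ x in a..b, f (a + b - x) = ∫ x in a..b, f x := by
  rw [integral_comp_sub_left f (a + b), add_sub_cancel_right, add_sub_cancel_left]

lemma two_mul_integral_eq_integral_add_reflect (hf : IntervalIntegrable f volume a b) :
    2 * ∫ x in a..b, f x = ∫ x in a..b, (f x + f (a + b - x)) := by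
  rw [integral_add hf hf.comp_reflect, integral_comp_reflect]
  ring

end Reflect

namespace ConvexOn

variable {φ : ℝ → ℝ} {a b x : ℝ}

lemma two_mul_map_midpoint_le_add_reflect (hφ : ConvexOn ℝ (Icc a b) φ) (hx : x ∈ Icc a b) :
    2 * φ ((a + b) / 2) ≤ φ x + φ (a + b - x) := by
  have hx' : a + b - x ∈ Icc a b := ⟨by linarith [hx.2], by linarith [hx.1]⟩
  have h := hφ.2 hx hx' (by norm_num : (0 : ℝ) ≤ 1 / 2) (by norm_num : (0 : ℝ) ≤ 1 / 2)
    (by norm_num)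
  simp only [smul_eq_mul] at h
  rw [show 1 / 2 * x + 1 / 2 * (a + b - x) = (a + b) / 2 by ring] at h
  linarith

lemma add_reflect_le (hφ : ConvexOn ℝ (Icc a b) φ) (hx : x ∈ Icc a b) :
    φ x + φ (a + b - x) ≤ φ a + φ b := by
  obtain ⟨hax, hxb⟩ := hx
  rcases hax.eq_or_lt with rfl | hax
  · simp
  have hab : 0 < b - a := by linarith
  have ha : a ∈ Icc a b := left_mem_Icc.2 (by linarith)
  have hb : b ∈ Icc a b := right_mem_Icc.2 (by linarith)
  -- `x` and `a + b - x` are the convex combinations of `a, b` with swapped weights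
  have key (t : ℝ) (ht₀ : 0 ≤ t) (ht₁ : t ≤ 1) :
      φ ((1 - t) * a + t * b) ≤ (1 - t) * φ a + t * φ b := by
    simpa only [smul_eq_mul] using hφ.2 ha hb (by linarith) ht₀ (by ring)
  have ht₀ : 0 ≤ (x - a) / (b - a) := div_nonneg (by linarith) hab.le
  have ht₁ : (x - a) / (b - a) ≤ 1 := (div_le_one hab).2 (by linarith)
  have h₁ := key _ ht₀ ht₁
  have h₂ := key (1 - (x - a) / (b - a)) (by linarith) (by linarith)
  rw [show (1 - (x - a) / (b - a)) * a + (x - a) / (b - a) * b = x by field_simp; ring] at h₁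
  rw [show (1 - (1 - (x - a) / (b - a))) * a + (1 - (x - a) / (b - a)) * b = a + b - x by
    field_simp; ring] at h₂
  linarith

lemma intervalIntegrable (hφ : ConvexOn ℝ (Icc a b) φ) (hab : a ≤ b) :
    IntervalIntegrable φ volume a b := by
  rw [intervalIntegrable_iff_integrableOn_Ioc_of_le hab, integrableOn_Ioc_iff_integrableOn_Ioo]
  have hcont : ContinuousOn φ (Ioo a b) := by
    simpa only [interior_Icc] using hφ.continuousOn_interior
  refine integrable_of_le_of_le (g₁ := fun _ ↦ 2 * φ ((a + b) / 2) - max (φ a) (φ b))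
    (g₂ := fun _ ↦ max (φ a) (φ b)) (hcont.aestronglyMeasurable measurableSet_Ioo) ?_ ?_
    (integrable_const _) (integrable_const _)
  all_goals filter_upwards [ae_restrict_mem measurableSet_Ioo] with x hx
  · have hx' : a + b - x ∈ Icc a b := ⟨by linarith [hx.2], by linarith [hx.1]⟩
    have := hφ.le_max_of_mem_Icc (left_mem_Icc.2 hab) (right_mem_Icc.2 hab) hx'
    linarith [hφ.two_mul_map_midpoint_le_add_reflect (Ioo_subset_Icc_self hx)]
  · exact hφ.le_max_of_mem_Icc (left_mem_Icc.2 hab) (right_mem_Icc.2 hab)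
      (Ioo_subset_Icc_self hx)

theorem sub_mul_map_midpoint_le_integral (hφ : ConvexOn ℝ (Icc a b) φ) (hab : a ≤ b) :
    (b - a) * φ ((a + b) / 2) ≤ ∫ x in a..b, φ x := by
  have hint := hφ.intervalIntegrable hab
  have h : ∫ _ in a..b, 2 * φ ((a + b) / 2) ≤ ∫ x in a..b, (φ x + φ (a + b - x)) :=
    integral_mono_on hab intervalIntegrable_const (hint.add hint.comp_reflect)
      fun x hx ↦ hφ.two_mul_map_midpoint_le_add_reflect hx
  rw [intervalIntegral.integral_const, smul_eq_mul,
    ← two_mul_integral_eq_integral_add_reflect hint] at h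
  linarith

theorem integral_le_sub_mul_add_div_two (hφ : ConvexOn ℝ (Icc a b) φ) (hab : a ≤ b) :
    ∫ x in a..b, φ x ≤ (b - a) * ((φ a + φ b) / 2) := by
  have hint := hφ.intervalIntegrable hab
  have h : ∫ x in a..b, (φ x + φ (a + b - x)) ≤ ∫ _ in a..b, (φ a + φ b) :=
    integral_mono_on hab (hint.add hint.comp_reflect) intervalIntegrable_const
      fun x hx ↦ hφ.add_reflect_le hx
  rw [intervalIntegral.integral_const, smul_eq_mul,
    ← two_mul_integral_eq_integral_add_reflect hint] at h
  linarith

end ConvexOn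

theorem hermite_hadamard_refined (φ : ℝ → ℝ)
    (hφ : ConvexOn ℝ (Set.Icc (0:ℝ) 1) φ) :
    (1 / 2) * (φ (1/4) + φ (3/4)) ≤ (∫ t in (0:ℝ)..1, φ t) ∧
      (∫ t in (0:ℝ)..1, φ t) ≤ (1 / 2) * (φ (1/2) + (φ 0 + φ 1) / 2) := by
  have h₁ : ConvexOn ℝ (Icc 0 (1 / 2)) φ :=
    hφ.subset (Icc_subset_Icc_right (by norm_num)) (convex_Icc _ _)
  have h₂ : ConvexOn ℝ (Icc (1 / 2) 1) φ :=
    hφ.subset (Icc_subset_Icc_left (by norm_num)) (convex_Icc _ _)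
  have hhalf₁ : (0 : ℝ) ≤ 1 / 2 := by norm_num
  have hhalf₂ : (1 / 2 : ℝ) ≤ 1 := by norm_num
  rw [← integral_add_adjacent_intervals (h₁.intervalIntegrable hhalf₁)
    (h₂.intervalIntegrable hhalf₂)]
  have lower₁ := h₁.sub_mul_map_midpoint_le_integral hhalf₁
  have lower₂ := h₂.sub_mul_map_midpoint_le_integral hhalf₂
  have upper₁ := h₁.integral_le_sub_mul_add_div_two hhalf₁
  have upper₂ := h₂.integral_le_sub_mul_add_div_two hhalf₂
  norm_num at lower₁ lower₂ upper₁ upper₂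
  constructor <;> linarith
end

section
/- Let A, B be bounded selfadjoint operators on a complex Hilbert space H with spectra in an interval I, and let f, g : I → ℝ be operator convex with f, g ≥ 0 on I. Then for every unit vector x ∈ H, ∫_0^1 ⟨f(tA+(1-t)B)x,x⟩ ⟨g(tA+(1-t)B)x,x⟩ dt ≤ (1/3) M(A,B)(x) + (1/6) N(A,B)(x), where M(A,B)(x) = ⟨f(A)x,x⟩⟨g(A)x,x⟩ + ⟨f(B)x,x⟩⟨g(B)x,x⟩ and N(A,B)(x) = ⟨f(A)x,x⟩⟨g(B)x,x⟩ + ⟨f(B)x,x⟩⟨g(A)x,x⟩. -/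
/-!
Operator convexity, evaluated in the vector state of `x`, bounds
`⟪f(tA + (1-t)B)x, x⟫` by the affine function `t⟪f(A)x, x⟫ + (1-t)⟪f(B)x, x⟫`, and likewise for `g`.
Both factors are nonnegative, since `f, g ≥ 0` on `I` and `I` contains the spectrum of every convex
combination of `A` and `B`. So the integrand is dominated by a product of two affine functions of `t`,
whose integral over `[0, 1]` produces the weights `1/3` and `1/6`.
-/

open Set

lemma integral_affine_mul_affine (a b c d : ℝ) :
    ∫ t in (0:ℝ)..1, (t * a + (1 - t) * b) * (t * c + (1 - t) * d) =
      1 / 3 * (a * c + b * d) + 1 / 6 * (a * d + b * c) := by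
  have h : ∀ t : ℝ, (t * a + (1 - t) * b) * (t * c + (1 - t) * d) =
      (a - b) * (c - d) * t ^ 2 + ((a - b) * d + b * (c - d)) * t + b * d := fun t => by ring
  simp only [h]
  rw [intervalIntegral.integral_add, intervalIntegral.integral_add,
    intervalIntegral.integral_const_mul, intervalIntegral.integral_const_mul]
  · simp only [integral_pow, integral_id, intervalIntegral.integral_const]
    norm_num
    ring
  all_goals exact Continuous.intervalIntegrable (by fun_prop) _ _

lemma integral_mul_le_of_le_affine {F G : ℝ → ℝ} {a b c d : ℝ}
    (hF₀ : ∀ t ∈ Icc (0:ℝ) 1, 0 ≤ F t) (hF : ∀ t ∈ Icc (0:ℝ) 1, F t ≤ t * a + (1 - t) * b)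
    (hG₀ : ∀ t ∈ Icc (0:ℝ) 1, 0 ≤ G t) (hG : ∀ t ∈ Icc (0:ℝ) 1, G t ≤ t * c + (1 - t) * d) :
    ∫ t in (0:ℝ)..1, F t * G t ≤ 1 / 3 * (a * c + b * d) + 1 / 6 * (a * d + b * c) := by
  by_cases hFG : IntervalIntegrable (fun t => F t * G t) MeasureTheory.volume 0 1
  · rw [← integral_affine_mul_affine]
    refine intervalIntegral.integral_mono_on zero_le_one hFG
      (Continuous.intervalIntegrable (by fun_prop) _ _) fun t ht => ?_
    exact mul_le_mul (hF t ht) (hG t ht) (hG₀ t ht) ((hF₀ t ht).trans (hF t ht))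
  · have h0 : (0:ℝ) ∈ Icc (0:ℝ) 1 := ⟨le_rfl, zero_le_one⟩
    have h1 : (1:ℝ) ∈ Icc (0:ℝ) 1 := ⟨zero_le_one, le_rfl⟩
    have ha : 0 ≤ a := by simpa using (hF₀ 1 h1).trans (hF 1 h1)
    have hb : 0 ≤ b := by simpa using (hF₀ 0 h0).trans (hF 0 h0)
    have hc : 0 ≤ c := by simpa using (hG₀ 1 h1).trans (hG 1 h1)
    have hd : 0 ≤ d := by simpa using (hG₀ 0 h0).trans (hG 0 h0)
    rw [intervalIntegral.integral_undef hFG]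
    positivity

section Spectrum

variable {A : Type*} [CStarAlgebra A] [PartialOrder A] [StarOrderedRing A]

lemma spectrum_smul_add_smul_subset_Icc {a b : A} (ha : IsSelfAdjoint a) (hb : IsSelfAdjoint b)
    {m M : ℝ} (hsa : spectrum ℝ a ⊆ Icc m M) (hsb : spectrum ℝ b ⊆ Icc m M)
    {t : ℝ} (ht : t ∈ Icc (0:ℝ) 1) :
    spectrum ℝ (t • a + (1 - t) • b) ⊆ Icc m M := by
  obtain ⟨ht₀, ht₁⟩ := ht
  have hc : IsSelfAdjoint (t • a + (1 - t) • b) :=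
    ((IsSelfAdjoint.all t).smul ha).add ((IsSelfAdjoint.all (1 - t)).smul hb)
  have h1t : 0 ≤ 1 - t := sub_nonneg.2 ht₁
  have hsplit (r : ℝ) : algebraMap ℝ A r = t • algebraMap ℝ A r + (1 - t) • algebraMap ℝ A r := by
    rw [← add_smul, add_sub_cancel, one_smul]
  intro y hy
  refine ⟨(algebraMap_le_iff_le_spectrum hc).1 ?_ y hy, (le_algebraMap_iff_spectrum_le hc).1 ?_ y hy⟩
  · rw [hsplit m]
    have hma := (algebraMap_le_iff_le_spectrum ha).2 fun y hy => (hsa hy).1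
    have hmb := (algebraMap_le_iff_le_spectrum hb).2 fun y hy => (hsb hy).1
    gcongr
  · rw [hsplit M]
    have hMa := (le_algebraMap_iff_spectrum_le ha).2 fun y hy => (hsa hy).2
    have hMb := (le_algebraMap_iff_spectrum_le hb).2 fun y hy => (hsb hy).2
    gcongr

lemma spectrum_smul_add_smul_subset {I : Set ℝ} (hI : I.OrdConnected) {a b : A}
    (ha : IsSelfAdjoint a) (hb : IsSelfAdjoint b) (hsa : spectrum ℝ a ⊆ I)
    (hsb : spectrum ℝ b ⊆ I) {t : ℝ} (ht : t ∈ Icc (0:ℝ) 1) :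
    spectrum ℝ (t • a + (1 - t) • b) ⊆ I := by
  nontriviality A
  set S := spectrum ℝ a ∪ spectrum ℝ b
  have hS : IsCompact S := (spectrum.isCompact a).union (spectrum.isCompact b)
  have hSne : S.Nonempty :=
    (ContinuousFunctionalCalculus.spectrum_nonempty a ha).mono subset_union_left
  have hSIcc : S ⊆ Icc (sInf S) (sSup S) := fun y hy =>
    ⟨csInf_le hS.bddBelow hy, le_csSup hS.bddAbove hy⟩
  have hIcc : Icc (sInf S) (sSup S) ⊆ I :=
    hI.out (union_subset hsa hsb (hS.sInf_mem hSne)) (union_subset hsa hsb (hS.sSup_mem hSne))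
  exact (spectrum_smul_add_smul_subset_Icc ha hb (subset_union_left.trans hSIcc)
    (subset_union_right.trans hSIcc) ht).trans hIcc

end Spectrum

section InnerProduct

variable {H : Type*} [NormedAddCommGroup H] [InnerProductSpace ℂ H]

lemma re_inner_apply_self_mono {P Q : H →L[ℂ] H} (h : P ≤ Q) (x : H) :
    (inner ℂ (P x) x).re ≤ (inner ℂ (Q x) x).re := by
  have := h.re_inner_nonneg_left x
  simp only [sub_apply, inner_sub_left, map_sub, RCLike.re_to_complex] at this
  linarith

lemma re_inner_smul_add_smul_apply_self (s r : ℝ) (P Q : H →L[ℂ] H) (x : H) :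
    (inner ℂ ((s • P + r • Q) x) x).re = s * (inner ℂ (P x) x).re + r * (inner ℂ (Q x) x).re := by
  simp [← Complex.coe_smul, mul_comm]

lemma re_inner_cfc_apply_self_nonneg [CompleteSpace H] {I : Set ℝ} {f : ℝ → ℝ}
    (hf₀ : ∀ t ∈ I, 0 ≤ f t) {C : H →L[ℂ] H} (hC : spectrum ℝ C ⊆ I) (x : H) :
    0 ≤ (inner ℂ (cfc f C x) x).re := by
  simpa using re_inner_apply_self_mono (cfc_nonneg fun y hy => hf₀ y (hC hy)) x

variable (H) in
def OperatorConvexOn [CompleteSpace H] (I : Set ℝ) (f : ℝ → ℝ) : Prop :=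
  ∀ C D : H →L[ℂ] H, IsSelfAdjoint C → IsSelfAdjoint D → spectrum ℝ C ⊆ I → spectrum ℝ D ⊆ I →
    ∀ l ∈ Icc (0:ℝ) 1, cfc f ((1 - l) • C + l • D) ≤ (1 - l) • cfc f C + l • cfc f D

lemma OperatorConvexOn.re_inner_cfc_smul_add_smul_le [CompleteSpace H] {I : Set ℝ} {f : ℝ → ℝ}
    (hf : OperatorConvexOn H I f) {A B : H →L[ℂ] H} (hA : IsSelfAdjoint A) (hB : IsSelfAdjoint B)
    (hsA : spectrum ℝ A ⊆ I) (hsB : spectrum ℝ B ⊆ I) {t : ℝ} (ht : t ∈ Icc (0:ℝ) 1) (x : H) :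
    (inner ℂ (cfc f (t • A + (1 - t) • B) x) x).re ≤
      t * (inner ℂ (cfc f A x) x).re + (1 - t) * (inner ℂ (cfc f B x) x).re := by
  rw [add_comm (t • A), add_comm (t * _), ← re_inner_smul_add_smul_apply_self]
  exact re_inner_apply_self_mono (hf B A hB hA hsB hsA t ht) x

end InnerProduct

theorem product_hermite_hadamard_right_general
    {H : Type*} [NormedAddCommGroup H] [InnerProductSpace ℂ H] [CompleteSpace H]
    (I : Set ℝ) (hI : Set.OrdConnected I)
    (A B : H →L[ℂ] H) (hA : IsSelfAdjoint A) (hB : IsSelfAdjoint B)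
    (hspA : spectrum ℝ A ⊆ I) (hspB : spectrum ℝ B ⊆ I)
    (f g : ℝ → ℝ)
    (hf0 : ∀ t ∈ I, 0 ≤ f t) (hg0 : ∀ t ∈ I, 0 ≤ g t)
    (hf : ∀ C D : H →L[ℂ] H, IsSelfAdjoint C → IsSelfAdjoint D →
      spectrum ℝ C ⊆ I → spectrum ℝ D ⊆ I → ∀ l ∈ Set.Icc (0:ℝ) 1,
      cfc f ((1 - l) • C + l • D) ≤ (1 - l) • cfc f C + l • cfc f D)
    (hg : ∀ C D : H →L[ℂ] H, IsSelfAdjoint C → IsSelfAdjoint D →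
      spectrum ℝ C ⊆ I → spectrum ℝ D ⊆ I → ∀ l ∈ Set.Icc (0:ℝ) 1,
      cfc g ((1 - l) • C + l • D) ≤ (1 - l) • cfc g C + l • cfc g D)
    (x : H) :
    (∫ t in (0:ℝ)..1,
        (inner ℂ ((cfc f (t • A + (1 - t) • B)) x) x : ℂ).re *
          (inner ℂ ((cfc g (t • A + (1 - t) • B)) x) x : ℂ).re) ≤
      (1/3) * ((inner ℂ ((cfc f A) x) x : ℂ).re * (inner ℂ ((cfc g A) x) x : ℂ).re +
               (inner ℂ ((cfc f B) x) x : ℂ).re * (inner ℂ ((cfc g B) x) x : ℂ).re) +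
      (1/6) * ((inner ℂ ((cfc f A) x) x : ℂ).re * (inner ℂ ((cfc g B) x) x : ℂ).re +
               (inner ℂ ((cfc f B) x) x : ℂ).re * (inner ℂ ((cfc g A) x) x : ℂ).re) := by
  have hsC (t : ℝ) (ht : t ∈ Icc (0:ℝ) 1) : spectrum ℝ (t • A + (1 - t) • B) ⊆ I :=
    spectrum_smul_add_smul_subset hI hA hB hspA hspB ht
  exact integral_mul_le_of_le_affine
    (fun t ht => re_inner_cfc_apply_self_nonneg hf0 (hsC t ht) x)
    (fun t ht => OperatorConvexOn.re_inner_cfc_smul_add_smul_le hf hA hB hspA hspB ht x)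
    (fun t ht => re_inner_cfc_apply_self_nonneg hg0 (hsC t ht) x)
    (fun t ht => OperatorConvexOn.re_inner_cfc_smul_add_smul_le hg hA hB hspA hspB ht x)

theorem product_hermite_hadamard_right
    {H : Type*} [NormedAddCommGroup H] [InnerProductSpace ℂ H] [CompleteSpace H]
    (I : Set ℝ) (hI : Set.OrdConnected I)
    (A B : H →L[ℂ] H) (hA : IsSelfAdjoint A) (hB : IsSelfAdjoint B)
    (hspA : spectrum ℝ A ⊆ I) (hspB : spectrum ℝ B ⊆ I)
    (f g : ℝ → ℝ) (hfc : ContinuousOn f I) (hgc : ContinuousOn g I)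
    (hf0 : ∀ t ∈ I, 0 ≤ f t) (hg0 : ∀ t ∈ I, 0 ≤ g t)
    (hf : ∀ C D : H →L[ℂ] H, IsSelfAdjoint C → IsSelfAdjoint D →
      spectrum ℝ C ⊆ I → spectrum ℝ D ⊆ I → ∀ l ∈ Set.Icc (0:ℝ) 1,
      cfc f ((1 - l) • C + l • D) ≤ (1 - l) • cfc f C + l • cfc f D)
    (hg : ∀ C D : H →L[ℂ] H, IsSelfAdjoint C → IsSelfAdjoint D →
      spectrum ℝ C ⊆ I → spectrum ℝ D ⊆ I → ∀ l ∈ Set.Icc (0:ℝ) 1,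
      cfc g ((1 - l) • C + l • D) ≤ (1 - l) • cfc g C + l • cfc g D)
    (x : H) (hx : ‖x‖ = 1) :
    (∫ t in (0:ℝ)..1,
        (inner ℂ ((cfc f (t • A + (1 - t) • B)) x) x : ℂ).re *
          (inner ℂ ((cfc g (t • A + (1 - t) • B)) x) x : ℂ).re) ≤
      (1/3) * ((inner ℂ ((cfc f A) x) x : ℂ).re * (inner ℂ ((cfc g A) x) x : ℂ).re +
               (inner ℂ ((cfc f B) x) x : ℂ).re * (inner ℂ ((cfc g B) x) x : ℂ).re) +
      (1/6) * ((inner ℂ ((cfc f A) x) x : ℂ).re * (inner ℂ ((cfc g B) x) x : ℂ).re +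
               (inner ℂ ((cfc f B) x) x : ℂ).re * (inner ℂ ((cfc g A) x) x : ℂ).re) :=
  product_hermite_hadamard_right_general I hI A B hA hB hspA hspB f g hf0 hg0 hf hg x
end

section
/- Let A be a bounded selfadjoint operator on a complex Hilbert space H with spectrum contained in [m,M], and let f, g : [m,M] → ℝ be continuous and synchronous, i.e., (f(t)-f(s))(g(t)-g(s)) ≥ 0 for all t,s ∈ [m,M]. Then for every unit vector x ∈ H, ⟨f(A)g(A)x,x⟩ ≥ ⟨f(A)x,x⟩⟨g(A)x,x⟩. If f, g are asynchronous (the product is ≤ 0), the reverse inequality holds. -/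
/-!
Let `φ` be a unital positive functional (here `T ↦ re ⟪T x, x⟫` for a unit vector `x`) and write
`c = φ (f a)`, `d = φ (g a)`, `P = φ (f a * g a)`. Fixing `s` in the spectrum, the function
`t ↦ (f t - f s) * (g t - g s)` is nonnegative on the spectrum, so applying `φ` to its functional
calculus gives `P - g s * c - f s * d + f s * g s ≥ 0`, i.e. `(f s - c) * (g s - d) ≥ c * d - P`.
Applying `φ` once more, now to the functional calculus of `s ↦ (f s - c) * (g s - d)`, yields
`P - c * d ≥ c * d - P`. The asynchronous case follows by replacing `g` with `-g`.
-/

section CFC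

variable {A F : Type*} [Ring A] [StarRing A] [TopologicalSpace A] [Algebra ℝ A]
  [ContinuousFunctionalCalculus ℝ A IsSelfAdjoint] [FunLike F A ℝ] [LinearMapClass F ℝ A ℝ]
  {φ : F} {a : A}

lemma map_cfc_sub_mul_sub (hφ : φ 1 = 1) (ha : IsSelfAdjoint a) {f g : ℝ → ℝ}
    (hf : ContinuousOn f (spectrum ℝ a)) (hg : ContinuousOn g (spectrum ℝ a)) (u v : ℝ) :
    φ (cfc (fun t ↦ (f t - u) * (g t - v)) a) =
      φ (cfc f a * cfc g a) - v * φ (cfc f a) - u * φ (cfc g a) + u * v := by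
  rw [cfc_mul (fun t ↦ f t - u) (fun t ↦ g t - v) a, cfc_sub f (fun _ ↦ u) a,
    cfc_sub g (fun _ ↦ v) a, cfc_const u a, cfc_const v a, Algebra.algebraMap_eq_smul_one,
    Algebra.algebraMap_eq_smul_one]
  simp only [sub_mul, mul_sub, smul_mul_assoc, mul_smul_comm, one_mul, mul_one, map_sub,
    map_smul, hφ, smul_eq_mul]
  ring

variable [PartialOrder A] [StarOrderedRing A] [OrderHomClass F A ℝ]

lemma le_map_cfc_of_forall_le (hφ : φ 1 = 1) (ha : IsSelfAdjoint a) {h : ℝ → ℝ}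
    (hh : ContinuousOn h (spectrum ℝ a)) {r : ℝ} (hr : ∀ t ∈ spectrum ℝ a, r ≤ h t) :
    r ≤ φ (cfc h a) := by
  calc r = φ (algebraMap ℝ A r) := by
        rw [Algebra.algebraMap_eq_smul_one, map_smul, hφ, smul_eq_mul, mul_one]
    _ ≤ φ (cfc h a) := OrderHomClass.mono φ (algebraMap_le_cfc h r a hr)

theorem mul_map_cfc_le_map_cfc_mul_cfc (hφ : φ 1 = 1) (ha : IsSelfAdjoint a) {f g : ℝ → ℝ}
    (hf : ContinuousOn f (spectrum ℝ a)) (hg : ContinuousOn g (spectrum ℝ a))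
    (hfg : ∀ t ∈ spectrum ℝ a, ∀ s ∈ spectrum ℝ a, 0 ≤ (f t - f s) * (g t - g s)) :
    φ (cfc f a) * φ (cfc g a) ≤ φ (cfc f a * cfc g a) := by
  set c := φ (cfc f a)
  set d := φ (cfc g a)
  set P := φ (cfc f a * cfc g a)
  have pointwise : ∀ s ∈ spectrum ℝ a, c * d - P ≤ (f s - c) * (g s - d) := by
    intro s hs
    have := le_map_cfc_of_forall_le hφ ha (by fun_prop) (fun t ht ↦ hfg t ht s hs)
    rw [map_cfc_sub_mul_sub hφ ha hf hg] at this
    linarith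
  have := le_map_cfc_of_forall_le hφ ha (by fun_prop) pointwise
  rw [map_cfc_sub_mul_sub hφ ha hf hg] at this
  linarith

theorem map_cfc_mul_cfc_le_mul_map_cfc (hφ : φ 1 = 1) (ha : IsSelfAdjoint a) {f g : ℝ → ℝ}
    (hf : ContinuousOn f (spectrum ℝ a)) (hg : ContinuousOn g (spectrum ℝ a))
    (hfg : ∀ t ∈ spectrum ℝ a, ∀ s ∈ spectrum ℝ a, (f t - f s) * (g t - g s) ≤ 0) :
    φ (cfc f a * cfc g a) ≤ φ (cfc f a) * φ (cfc g a) := by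
  have := mul_map_cfc_le_map_cfc_mul_cfc hφ ha hf hg.neg (g := fun t ↦ -g t) fun t ht s hs ↦ by
    nlinarith [hfg t ht s hs]
  simpa only [cfc_neg g a, mul_neg, map_neg, neg_le_neg_iff] using this

end CFC

namespace ContinuousLinearMap

variable {E : Type*} [NormedAddCommGroup E] [InnerProductSpace ℂ E] [CompleteSpace E]

noncomputable def vectorFunctional (x : E) : (E →L[ℂ] E) →ₚ[ℝ] ℝ :=
  .mk₀
    { toFun T := (inner ℂ (T x) x).re
      map_add' S T := by simp
      map_smul' r T := by simp }
    fun T hT ↦ ((nonneg_iff_isPositive T).1 hT).re_inner_nonneg_left x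

lemma vectorFunctional_apply (x : E) (T : E →L[ℂ] E) :
    vectorFunctional x T = (inner ℂ (T x) x).re := rfl

lemma vectorFunctional_one (x : E) : vectorFunctional x (1 : E →L[ℂ] E) = ‖x‖ ^ 2 := by
  simp [vectorFunctional_apply, ← Complex.ofReal_pow]

end ContinuousLinearMap

theorem chebyshev_operator
    {H : Type*} [NormedAddCommGroup H] [InnerProductSpace ℂ H] [CompleteSpace H]
    (m M : ℝ) (A : H →L[ℂ] H) (hA : IsSelfAdjoint A)
    (hsp : spectrum ℝ A ⊆ Set.Icc m M)
    (f g : ℝ → ℝ) (hfc : ContinuousOn f (Set.Icc m M)) (hgc : ContinuousOn g (Set.Icc m M)) :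
    ((∀ t ∈ Set.Icc m M, ∀ s ∈ Set.Icc m M, 0 ≤ (f t - f s) * (g t - g s)) →
      ∀ x : H, ‖x‖ = 1 →
        (inner ℂ ((cfc f A * cfc g A) x) x : ℂ).re ≥
          (inner ℂ ((cfc f A) x) x : ℂ).re * (inner ℂ ((cfc g A) x) x : ℂ).re) ∧
    ((∀ t ∈ Set.Icc m M, ∀ s ∈ Set.Icc m M, (f t - f s) * (g t - g s) ≤ 0) →
      ∀ x : H, ‖x‖ = 1 →
        (inner ℂ ((cfc f A * cfc g A) x) x : ℂ).re ≤
          (inner ℂ ((cfc f A) x) x : ℂ).re * (inner ℂ ((cfc g A) x) x : ℂ).re) := by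
  have hf := hfc.mono hsp
  have hg := hgc.mono hsp
  have unital {x : H} (hx : ‖x‖ = 1) : ContinuousLinearMap.vectorFunctional x 1 = 1 := by
    rw [ContinuousLinearMap.vectorFunctional_one, hx, one_pow]
  refine ⟨fun hfg x hx ↦ ?_, fun hfg x hx ↦ ?_⟩
  · exact mul_map_cfc_le_map_cfc_mul_cfc (unital hx) hA hf hg
      fun t ht s hs ↦ hfg t (hsp ht) s (hsp hs)
  · exact map_cfc_mul_cfc_le_mul_map_cfc (unital hx) hA hf hg
      fun t ht s hs ↦ hfg t (hsp ht) s (hsp hs)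
end

section
/- Let A, B be bounded selfadjoint operators on a complex Hilbert space H with spectra in [0,1]. Then for every unit vector x ∈ H, ∫_0^1 ⟨(tA+(1-t)B)x,x⟩ ⟨(tA+(1-t)B)²x,x⟩ dt ≤ (1/2) ⟨(A³ + B³)x,x⟩. -/
/-!
Write `C = t • A + (1 - t) • B`, `aₖ = re ⟪Aᵏ x, x⟫` and `bₖ = re ⟪Bᵏ x, x⟫`. The first factor
of the integrand is affine in `t` and the second is `‖C x‖²`, which is convex in `t`, so the
integrand is at most `(t a₁ + (1 - t) b₁) (t a₂ + (1 - t) b₂)`. Cauchy–Schwarz (for the inner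
product and for the form `⟪A ·, ·⟫`) gives `a₁² ≤ a₂` and `a₂² ≤ a₁ a₃`; these imply the
Chebyshev-type bound `a₁ a₂ ≤ a₃` and the cross bound `a₁ b₂ + a₂ b₁ ≤ a₃ + b₃`, so the
integrand is at most `t a₃ + (1 - t) b₃`, whose integral is `(a₃ + b₃) / 2`.
-/

open scoped InnerProductSpace

/-- Inequalities satisfied by the first three moments `mₖ = ∫ λ ^ k dμ` of a probability measure
`μ` on `[0, ∞)`; for a positive operator `T` and a unit vector `x`, `μ` is the spectral measure of
`T` at `x` and `mₖ = re ⟪T ^ k x, x⟫`. -/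
structure MomentBounds (m₁ m₂ m₃ : ℝ) : Prop where
  nonneg_one : 0 ≤ m₁
  sq_one_le_two : m₁ ^ 2 ≤ m₂
  sq_two_le_one_mul_three : m₂ ^ 2 ≤ m₁ * m₃
  nonneg_three : 0 ≤ m₃

section Scalar

variable {a₁ a₂ a₃ b₁ b₂ b₃ : ℝ}

lemma mul_mul_sub_le_of_le_mul (ha₁ : 0 ≤ a₁) (hb₁ : 0 ≤ b₁) (ha : a₁ ^ 2 ≤ a₂)
    (hb : b₁ ^ 2 ≤ b₂) (h : a₂ ≤ a₁ * b₁) :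
    a₂ * b₁ * (a₁ * b₁ - a₂) ≤ a₁ * b₂ * (b₂ - a₁ * b₁) := by
  have hab : a₁ ≤ b₁ := by nlinarith
  calc a₂ * b₁ * (a₁ * b₁ - a₂) ≤ a₁ * b₁ * b₁ * (a₁ * (b₁ - a₁)) := by
        nlinarith [mul_le_mul h (by nlinarith : a₁ * b₁ - a₂ ≤ a₁ * (b₁ - a₁)) (by nlinarith)
          (by positivity)]
    _ ≤ a₁ * b₂ * (b₂ - a₁ * b₁) := by
        have hb' : b₁ * (b₁ - a₁) ≤ b₂ - a₁ * b₁ := by nlinarith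
        have := mul_le_mul (by nlinarith : a₁ * b₁ ≤ b₂) hb' (by nlinarith) (by nlinarith)
        nlinarith [mul_le_mul_of_nonneg_left this ha₁]

lemma mul_mul_add_mul_le (ha₁ : 0 ≤ a₁) (hb₁ : 0 ≤ b₁) (ha : a₁ ^ 2 ≤ a₂) (hb : b₁ ^ 2 ≤ b₂) :
    a₁ * b₁ * (a₁ * b₂ + a₂ * b₁) ≤ a₂ ^ 2 * b₁ + a₁ * b₂ ^ 2 := by
  rcases le_total a₂ (a₁ * b₁) with h | h
  · nlinarith [mul_mul_sub_le_of_le_mul ha₁ hb₁ ha hb h]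
  rcases le_total b₂ (a₁ * b₁) with h' | h'
  · nlinarith [mul_mul_sub_le_of_le_mul hb₁ ha₁ hb ha (by linarith)]
  · nlinarith [mul_nonneg (mul_nonneg ((sq_nonneg a₁).trans ha) hb₁) (sub_nonneg.2 h),
      mul_nonneg (mul_nonneg ha₁ ((sq_nonneg b₁).trans hb)) (sub_nonneg.2 h')]

namespace MomentBounds

lemma mul_le (h : MomentBounds a₁ a₂ a₃) : a₁ * a₂ ≤ a₃ := by
  obtain ⟨h₁, h₁₂, h₂₃, h₃⟩ := h
  nlinarith [mul_nonneg h₁ ((sq_nonneg a₁).trans h₁₂)]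

lemma mul_add_mul_le (ha : MomentBounds a₁ a₂ a₃) (hb : MomentBounds b₁ b₂ b₃) :
    a₁ * b₂ + a₂ * b₁ ≤ a₃ + b₃ := by
  obtain ⟨ha₁, ha₁₂, ha₂₃, ha₃⟩ := ha
  obtain ⟨hb₁, hb₁₂, hb₂₃, hb₃⟩ := hb
  have key : a₁ * b₁ * (a₁ * b₂ + a₂ * b₁) ≤ a₁ * b₁ * (a₃ + b₃) := by
    nlinarith [mul_mul_add_mul_le ha₁ hb₁ ha₁₂ hb₁₂, mul_le_mul_of_nonneg_right ha₂₃ hb₁,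
      mul_le_mul_of_nonneg_right hb₂₃ ha₁]
  rcases (mul_nonneg ha₁ hb₁).eq_or_lt with h0 | hpos
  · rcases mul_eq_zero.1 h0.symm with rfl | rfl <;> nlinarith
  · exact le_of_mul_le_mul_left key hpos

lemma convexCombo_mul_le (ha : MomentBounds a₁ a₂ a₃) (hb : MomentBounds b₁ b₂ b₃) {t : ℝ}
    (ht₀ : 0 ≤ t) (ht₁ : t ≤ 1) :
    (t * a₁ + (1 - t) * b₁) * (t * a₂ + (1 - t) * b₂) ≤ t * a₃ + (1 - t) * b₃ := by
  nlinarith [mul_nonneg (sq_nonneg t) (sub_nonneg.2 ha.mul_le),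
    mul_nonneg (sq_nonneg (1 - t)) (sub_nonneg.2 hb.mul_le),
    mul_nonneg (mul_nonneg ht₀ (sub_nonneg.2 ht₁)) (sub_nonneg.2 (ha.mul_add_mul_le hb))]

end MomentBounds

end Scalar

lemma sq_norm_smul_add_one_sub_smul_le {E : Type*} [SeminormedAddCommGroup E] [NormedSpace ℝ E]
    (u v : E) {t : ℝ} (ht₀ : 0 ≤ t) (ht₁ : t ≤ 1) :
    ‖t • u + (1 - t) • v‖ ^ 2 ≤ t * ‖u‖ ^ 2 + (1 - t) * ‖v‖ ^ 2 := by
  simpa using (convexOn_univ_norm.pow (fun _ _ => norm_nonneg _) 2).2 (Set.mem_univ u)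
    (Set.mem_univ v) ht₀ (sub_nonneg.2 ht₁) (by ring)

lemma intervalIntegral_convexCombo (p q : ℝ) :
    ∫ t in (0 : ℝ)..1, (t * p + (1 - t) * q) = (p + q) / 2 := by
  have h : ∀ t : ℝ, t * p + (1 - t) * q = q + t * (p - q) := fun t => by ring
  simp only [h]
  rw [intervalIntegral.integral_add intervalIntegrable_const
    ((by fun_prop : Continuous fun t : ℝ => t * (p - q)).intervalIntegrable _ _),
    intervalIntegral.integral_mul_const, intervalIntegral.integral_const, integral_id]
  simp only [sub_zero, smul_eq_mul, one_mul, one_pow, ne_eq, OfNat.ofNat_ne_zero,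
    not_false_eq_true, zero_pow, one_div]
  ring

section Operator

variable {H : Type*} [NormedAddCommGroup H] [InnerProductSpace ℂ H]

lemma re_inner_self_eq_norm_sq (w : H) : (⟪w, w⟫_ℂ).re = ‖w‖ ^ 2 :=
  inner_self_eq_norm_sq (𝕜 := ℂ) w

variable [CompleteSpace H]

lemma ContinuousLinearMap.isPositive_of_spectrum_nonneg {T : H →L[ℂ] H} (hT : IsSelfAdjoint T)
    (h : ∀ μ ∈ spectrum ℝ T, 0 ≤ μ) : T.IsPositive :=
  (nonneg_iff_isPositive T).1 ((StarOrderedRing.nonneg_iff_spectrum_nonneg T hT).2 h)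

lemma ContinuousLinearMap.IsPositive.sq_re_inner_le {T : H →L[ℂ] H} (hT : T.IsPositive)
    (u v : H) : (⟪T u, v⟫_ℂ).re ^ 2 ≤ (⟪T u, u⟫_ℂ).re * (⟪T v, v⟫_ℂ).re := by
  have hT₀ : 0 ≤ T := (nonneg_iff_isPositive T).2 hT
  set S := CFC.sqrt T
  have hS : ∀ a b : H, ⟪S a, b⟫_ℂ = ⟪a, S b⟫_ℂ := (CFC.sqrt_nonneg T).isSelfAdjoint.isSymmetric
  have h : ∀ w z : H, ⟪T w, z⟫_ℂ = ⟪S w, S z⟫_ℂ := fun w z => by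
    rw [← CFC.sqrt_mul_sqrt_self T hT₀, mul_apply_eq_comp, hS]
  rw [h, h, h, re_inner_self_eq_norm_sq, re_inner_self_eq_norm_sq, ← mul_pow]
  exact sq_le_sq' (neg_le_of_abs_le ((Complex.abs_re_le_norm _).trans (norm_inner_le_norm _ _)))
    ((Complex.re_le_norm _).trans (norm_inner_le_norm _ _))

lemma IsSelfAdjoint.re_inner_sq_apply {T : H →L[ℂ] H} (hT : IsSelfAdjoint T) (x : H) :
    (⟪(T ^ 2) x, x⟫_ℂ).re = ‖T x‖ ^ 2 := by
  have hT' : ∀ a b : H, ⟪T a, b⟫_ℂ = ⟪a, T b⟫_ℂ := hT.isSymmetric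
  rw [sq, mul_apply_eq_comp, hT', re_inner_self_eq_norm_sq]

lemma IsSelfAdjoint.re_inner_cube_apply {T : H →L[ℂ] H} (hT : IsSelfAdjoint T) (x : H) :
    (⟪(T ^ 3) x, x⟫_ℂ).re = (⟪T (T x), T x⟫_ℂ).re := by
  have hT' : ∀ a b : H, ⟪T a, b⟫_ℂ = ⟪a, T b⟫_ℂ := hT.isSymmetric
  rw [pow_succ, mul_apply_eq_comp, sq, mul_apply_eq_comp, hT']

lemma ContinuousLinearMap.IsPositive.momentBounds {T : H →L[ℂ] H} (hT : T.IsPositive) {x : H}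
    (hx : ‖x‖ = 1) :
    MomentBounds (⟪T x, x⟫_ℂ).re (⟪(T ^ 2) x, x⟫_ℂ).re (⟪(T ^ 3) x, x⟫_ℂ).re := by
  have hT' : IsSelfAdjoint T := hT.isSelfAdjoint
  refine ⟨hT.re_inner_nonneg_left x, ?_, ?_, ?_⟩
  · rw [hT'.re_inner_sq_apply]
    have h := (Complex.abs_re_le_norm _).trans (norm_inner_le_norm (𝕜 := ℂ) (T x) x)
    rw [hx, mul_one] at h
    exact sq_le_sq' (neg_le_of_abs_le h) ((le_abs_self _).trans h)
  · rw [hT'.re_inner_sq_apply, ← re_inner_self_eq_norm_sq, hT'.re_inner_cube_apply]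
    exact hT.sq_re_inner_le x (T x)
  · rw [hT'.re_inner_cube_apply]
    exact hT.re_inner_nonneg_left (T x)

lemma re_inner_mul_re_inner_sq_le {A B : H →L[ℂ] H} (hA : A.IsPositive) (hB : B.IsPositive)
    {x : H} (hx : ‖x‖ = 1) {t : ℝ} (ht₀ : 0 ≤ t) (ht₁ : t ≤ 1) :
    (⟪(t • A + (1 - t) • B) x, x⟫_ℂ).re * (⟪((t • A + (1 - t) • B) ^ 2) x, x⟫_ℂ).re ≤
      t * (⟪(A ^ 3) x, x⟫_ℂ).re + (1 - t) * (⟪(B ^ 3) x, x⟫_ℂ).re := by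
  have hA' := hA.momentBounds hx
  have hB' := hB.momentBounds hx
  set C := t • A + (1 - t) • B
  have hC : IsSelfAdjoint C := ((IsSelfAdjoint.all t).smul hA.isSelfAdjoint).add
    ((IsSelfAdjoint.all (1 - t)).smul hB.isSelfAdjoint)
  have hCx : C x = t • A x + (1 - t) • B x := rfl
  have h₁ : (⟪C x, x⟫_ℂ).re = t * (⟪A x, x⟫_ℂ).re + (1 - t) * (⟪B x, x⟫_ℂ).re := by
    simp [hCx]
  have h₂ : (⟪(C ^ 2) x, x⟫_ℂ).re ≤
      t * (⟪(A ^ 2) x, x⟫_ℂ).re + (1 - t) * (⟪(B ^ 2) x, x⟫_ℂ).re := by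
    rw [hC.re_inner_sq_apply, hA.isSelfAdjoint.re_inner_sq_apply,
      hB.isSelfAdjoint.re_inner_sq_apply, hCx]
    exact sq_norm_smul_add_one_sub_smul_le _ _ ht₀ ht₁
  have hC₀ : 0 ≤ (⟪C x, x⟫_ℂ).re := by
    rw [h₁]
    nlinarith [hA'.nonneg_one, hB'.nonneg_one]
  calc _ ≤ (⟪C x, x⟫_ℂ).re * (t * (⟪(A ^ 2) x, x⟫_ℂ).re + (1 - t) * (⟪(B ^ 2) x, x⟫_ℂ).re) :=
        mul_le_mul_of_nonneg_left h₂ hC₀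
    _ ≤ _ := h₁ ▸ hA'.convexCombo_mul_le hB' ht₀ ht₁

end Operator

theorem cube_example_synchronous
    {H : Type*} [NormedAddCommGroup H] [InnerProductSpace ℂ H] [CompleteSpace H]
    (A B : H →L[ℂ] H) (hA : IsSelfAdjoint A) (hB : IsSelfAdjoint B)
    (hspA : spectrum ℝ A ⊆ Set.Icc (0:ℝ) 1) (hspB : spectrum ℝ B ⊆ Set.Icc (0:ℝ) 1)
    (x : H) (hx : ‖x‖ = 1) :
    (∫ t in (0:ℝ)..1,
        (inner ℂ ((t • A + (1 - t) • B) x) x : ℂ).re *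
          (inner ℂ (((t • A + (1 - t) • B) ^ 2) x) x : ℂ).re) ≤
      (1/2) * (inner ℂ ((A ^ 3 + B ^ 3) x) x : ℂ).re := by
  have hApos := ContinuousLinearMap.isPositive_of_spectrum_nonneg hA fun μ hμ => (hspA hμ).1
  have hBpos := ContinuousLinearMap.isPositive_of_spectrum_nonneg hB fun μ hμ => (hspB hμ).1
  calc _ ≤ ∫ t in (0:ℝ)..1, (t * (⟪(A ^ 3) x, x⟫_ℂ).re + (1 - t) * (⟪(B ^ 3) x, x⟫_ℂ).re) :=
        intervalIntegral.integral_mono_on zero_le_one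
          (by apply Continuous.intervalIntegrable; fun_prop)
          (by apply Continuous.intervalIntegrable; fun_prop)
          fun t ht => re_inner_mul_re_inner_sq_le hApos hBpos hx ht.1 ht.2
    _ = ((⟪(A ^ 3) x, x⟫_ℂ).re + (⟪(B ^ 3) x, x⟫_ℂ).re) / 2 := intervalIntegral_convexCombo _ _
    _ = _ := by rw [add_apply, inner_add_left, Complex.add_re]; ring
end

section
/- Let φ, ψ : [0,1] → ℝ be convex and nonnegative. Then ∫_0^1 φ(t)ψ(t) dt ≤ (1/3)(φ(1)ψ(1) + φ(0)ψ(0)) + (1/6)(φ(1)ψ(0) + φ(0)ψ(1)). -/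
lemma poly_int (a b c d : ℝ) :
    (∫ t in (0:ℝ)..1, ((1-t)*a + t*b) * ((1-t)*c + t*d))
      = a*c/3 + b*d/3 + (a*d + b*c)/6 := by
  have h : ∀ t : ℝ, ((1-t)*a + t*b) * ((1-t)*c + t*d)
      = a*c + (a*d + b*c - 2*a*c)*t + (a*c - a*d - b*c + b*d)*t^2 := by
    intro t; ring
  have hc1 : IntervalIntegrable (fun _ : ℝ => a*c) MeasureTheory.volume 0 1 :=
    intervalIntegrable_const
  have hc2 : IntervalIntegrable (fun t : ℝ => (a*d + b*c - 2*a*c)*t) MeasureTheory.volume 0 1 :=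
    (continuous_const.mul continuous_id).intervalIntegrable 0 1
  have hc3 : IntervalIntegrable (fun t : ℝ => (a*c - a*d - b*c + b*d)*t^2) MeasureTheory.volume 0 1 :=
    (continuous_const.mul (continuous_pow 2)).intervalIntegrable 0 1
  simp only [h]
  rw [intervalIntegral.integral_add (hc1.add hc2) hc3, intervalIntegral.integral_add hc1 hc2,
    intervalIntegral.integral_const, intervalIntegral.integral_const_mul,
    intervalIntegral.integral_const_mul, integral_id, integral_pow]
  norm_num; ring

theorem pachpatte (φ ψ : ℝ → ℝ)
    (hφ : ConvexOn ℝ (Set.Icc (0:ℝ) 1) φ) (hψ : ConvexOn ℝ (Set.Icc (0:ℝ) 1) ψ)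
    (hφ0 : ∀ t ∈ Set.Icc (0:ℝ) 1, 0 ≤ φ t) (hψ0 : ∀ t ∈ Set.Icc (0:ℝ) 1, 0 ≤ ψ t) :
    (∫ t in (0:ℝ)..1, φ t * ψ t) ≤
      (1/3) * (φ 1 * ψ 1 + φ 0 * ψ 0) + (1/6) * (φ 1 * ψ 0 + φ 0 * ψ 1) := by
  have h0 : (0:ℝ) ∈ Set.Icc (0:ℝ) 1 := by norm_num
  have h1 : (1:ℝ) ∈ Set.Icc (0:ℝ) 1 := by norm_num
  have ha := hφ0 0 h0; have hb := hφ0 1 h1; have hcn := hψ0 0 h0; have hd := hψ0 1 h1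
  by_cases hi : IntervalIntegrable (fun t => φ t * ψ t) MeasureTheory.volume 0 1
  · have bφ : ∀ t ∈ Set.Icc (0:ℝ) 1, φ t ≤ (1-t)*φ 0 + t*φ 1 := by
      intro t ht
      have := hφ.2 h0 h1 (show (0:ℝ) ≤ 1 - t by linarith [ht.2]) ht.1 (show (1-t)+t = 1 by ring)
      simpa using this
    have bψ : ∀ t ∈ Set.Icc (0:ℝ) 1, ψ t ≤ (1-t)*ψ 0 + t*ψ 1 := by
      intro t ht
      have := hψ.2 h0 h1 (show (0:ℝ) ≤ 1 - t by linarith [ht.2]) ht.1 (show (1-t)+t = 1 by ring)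
      simpa using this
    have hg : IntervalIntegrable (fun t : ℝ => ((1-t)*φ 0 + t*φ 1) * ((1-t)*ψ 0 + t*ψ 1))
        MeasureTheory.volume 0 1 := by
      apply Continuous.intervalIntegrable; continuity
    have hmono : (∫ t in (0:ℝ)..1, φ t * ψ t)
        ≤ ∫ t in (0:ℝ)..1, ((1-t)*φ 0 + t*φ 1) * ((1-t)*ψ 0 + t*ψ 1) := by
      apply intervalIntegral.integral_mono_on (by norm_num) hi hg
      intro t ht
      have hφt := bφ t ht
      have hψt := bψ t ht
      have hφnn := hφ0 t ht
      have hψnn := hψ0 t ht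
      exact mul_le_mul hφt hψt hψnn (le_trans hφnn hφt)
    rw [poly_int] at hmono
    linarith
  · rw [intervalIntegral.integral_undef hi]
    nlinarith [mul_nonneg ha hcn, mul_nonneg hb hd, mul_nonneg ha hd, mul_nonneg hb hcn]
end

section
/- Let φ, ψ : [0,1] → ℝ be convex and nonnegative. Then φ(1/2)ψ(1/2) ≤ (1/2)∫_0^1 φ(t)ψ(t) dt + (1/12)(φ(1)ψ(1) + φ(0)ψ(0)) + (1/6)(φ(1)ψ(0) + φ(0)ψ(1)). -/
set_option linter.unnecessarySimpa false
open MeasureTheory intervalIntegral Set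

private lemma int_poly (c0 c1 c2 : ℝ) :
    ∫ t in (0:ℝ)..1, (c0 + c1*t + c2*t^2) = c0 + c1/2 + c2/3 := by
  have h0 : IntervalIntegrable (fun t : ℝ => c0) volume 0 1 :=
    (continuous_const.intervalIntegrable _ _)
  have h1 : IntervalIntegrable (fun t : ℝ => c1 * t) volume 0 1 :=
    ((continuous_const.mul continuous_id).intervalIntegrable _ _)
  have h2 : IntervalIntegrable (fun t : ℝ => c2 * t^2) volume 0 1 :=
    ((continuous_const.mul (continuous_pow 2)).intervalIntegrable _ _)
  rw [intervalIntegral.integral_add (h0.add h1) h2, intervalIntegral.integral_add h0 h1,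
    intervalIntegral.integral_const, intervalIntegral.integral_const_mul,
    intervalIntegral.integral_const_mul, integral_id, integral_pow]
  norm_num
  ring

theorem midpoint_product_bound (φ ψ : ℝ → ℝ)
    (hφ : ConvexOn ℝ (Set.Icc (0:ℝ) 1) φ) (hψ : ConvexOn ℝ (Set.Icc (0:ℝ) 1) ψ)
    (hφ0 : ∀ t ∈ Set.Icc (0:ℝ) 1, 0 ≤ φ t) (hψ0 : ∀ t ∈ Set.Icc (0:ℝ) 1, 0 ≤ ψ t) :
    φ (1/2) * ψ (1/2) ≤ (1/2) * (∫ t in (0:ℝ)..1, φ t * ψ t) +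
      (1/12) * (φ 1 * ψ 1 + φ 0 * ψ 0) + (1/6) * (φ 1 * ψ 0 + φ 0 * ψ 1) := by
  -- linear upper bound from convexity
  have lin : ∀ (f : ℝ → ℝ), ConvexOn ℝ (Set.Icc (0:ℝ) 1) f →
      ∀ t ∈ Set.Icc (0:ℝ) 1, f t ≤ (1 - t) * f 0 + t * f 1 := by
    intro f hf t ht
    have h0 : (0:ℝ) ∈ Set.Icc (0:ℝ) 1 := by norm_num
    have h1 : (1:ℝ) ∈ Set.Icc (0:ℝ) 1 := by norm_num
    have := hf.2 h0 h1 (by linarith [ht.2] : (0:ℝ) ≤ 1 - t) ht.1 (by ring)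
    simpa using this
  -- midpoint bound from convexity
  have mid : ∀ (f : ℝ → ℝ), ConvexOn ℝ (Set.Icc (0:ℝ) 1) f →
      ∀ t ∈ Set.Icc (0:ℝ) 1, f (1/2) ≤ (f t + f (1 - t)) / 2 := by
    intro f hf t ht
    have ht' : (1 - t) ∈ Set.Icc (0:ℝ) 1 := ⟨by linarith [ht.2], by linarith [ht.1]⟩
    have := hf.2 ht ht' (by norm_num : (0:ℝ) ≤ 1/2) (by norm_num : (0:ℝ) ≤ 1/2) (by norm_num)
    have heq : (1/2 : ℝ) • t + (1/2 : ℝ) • (1 - t) = 1/2 := by simp; ring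
    rw [heq] at this
    simp only [smul_eq_mul] at this
    linarith
  set A0 := φ 0 with hA0
  set A1 := φ 1 with hA1
  set B0 := ψ 0 with hB0
  set B1 := ψ 1 with hB1
  set g : ℝ → ℝ := fun t => ((1 - t) * A0 + t * A1) * (t * B0 + (1 - t) * B1) with hg
  set F : ℝ → ℝ := fun t => (1/4) * (φ t * ψ t) + (1/4) * (φ (1-t) * ψ (1-t))
      + (1/4) * g t + (1/4) * g (1-t) with hF
  have h01 : ((0:ℝ):ℝ) ≤ 1 := by norm_num
  have hmem : ∀ t ∈ Set.Icc (0:ℝ) 1, (1 - t) ∈ Set.Icc (0:ℝ) 1 := fun t ht =>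
    ⟨by linarith [ht.2], by linarith [ht.1]⟩
  -- pointwise bound
  have hpw : ∀ t ∈ Set.Icc (0:ℝ) 1, φ (1/2) * ψ (1/2) ≤ F t := by
    intro t ht
    have ht' := hmem t ht
    have hφm := mid φ hφ t ht
    have hψm := mid ψ hψ t ht
    have hφt := hφ0 t ht
    have hφt' := hφ0 _ ht'
    have hψt := hψ0 t ht
    have hψt' := hψ0 _ ht'
    have hφh : 0 ≤ φ (1/2) := hφ0 _ (by norm_num)
    have hψh : 0 ≤ ψ (1/2) := hψ0 _ (by norm_num)
    have step1 : φ (1/2) * ψ (1/2) ≤ ((φ t + φ (1-t))/2) * ((ψ t + ψ (1-t))/2) :=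
      mul_le_mul hφm hψm hψh (by linarith)
    -- cross terms
    have c1 : φ t * ψ (1-t) ≤ g t := by
      have h1 := lin φ hφ t ht
      have h2 := lin ψ hψ _ ht'
      have : (1 - (1 - t)) * B0 + (1 - t) * B1 = t * B0 + (1 - t) * B1 := by ring
      rw [this] at h2
      calc φ t * ψ (1-t) ≤ ((1-t)*A0 + t*A1) * ψ (1-t) :=
            mul_le_mul_of_nonneg_right h1 hψt'
        _ ≤ ((1-t)*A0 + t*A1) * (t*B0 + (1-t)*B1) :=
            mul_le_mul_of_nonneg_left h2 (le_trans hφt h1)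
    have c2 : φ (1-t) * ψ t ≤ g (1-t) := by
      have h1 := lin φ hφ _ ht'
      have h2 := lin ψ hψ t ht
      have e1 : (1 - (1-t)) * A0 + (1-t) * A1 = t * A0 + (1-t) * A1 := by ring
      rw [e1] at h1
      have : g (1-t) = (t * A0 + (1-t) * A1) * ((1-t) * B0 + t * B1) := by
        simp only [hg]; ring
      rw [this]
      calc φ (1-t) * ψ t ≤ (t*A0 + (1-t)*A1) * ψ t :=
            mul_le_mul_of_nonneg_right h1 hψt
        _ ≤ (t*A0 + (1-t)*A1) * ((1-t)*B0 + t*B1) :=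
            mul_le_mul_of_nonneg_left h2 (le_trans hφt' h1)
    have expand : ((φ t + φ (1-t))/2) * ((ψ t + ψ (1-t))/2)
        = (1/4) * (φ t * ψ t) + (1/4) * (φ (1-t) * ψ (1-t))
          + (1/4) * (φ t * ψ (1-t)) + (1/4) * (φ (1-t) * ψ t) := by ring
    simp only [hF]
    nlinarith [step1, c1, c2]
  -- integrability of φ*ψ
  have hcontφ : ContinuousOn φ (Set.Ioo (0:ℝ) 1) :=
    (hφ.subset Set.Ioo_subset_Icc_self (convex_Ioo 0 1)).continuousOn isOpen_Ioo
  have hcontψ : ContinuousOn ψ (Set.Ioo (0:ℝ) 1) :=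
    (hψ.subset Set.Ioo_subset_Icc_self (convex_Ioo 0 1)).continuousOn isOpen_Ioo
  have hbound : ∀ t ∈ Set.Icc (0:ℝ) 1, ‖φ t * ψ t‖ ≤ (|A0| + |A1|) * (|B0| + |B1|) := by
    intro t ht
    have hφt := hφ0 t ht
    have hψt := hψ0 t ht
    have h1 := lin φ hφ t ht
    have h2 := lin ψ hψ t ht
    have hφle : φ t ≤ |A0| + |A1| := by
      have : (1-t) * A0 + t * A1 ≤ |A0| + |A1| := by
        have := abs_nonneg A0; have := abs_nonneg A1
        have l0 := le_abs_self A0; have l1 := le_abs_self A1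
        nlinarith [ht.1, ht.2]
      linarith
    have hψle : ψ t ≤ |B0| + |B1| := by
      have : (1-t) * B0 + t * B1 ≤ |B0| + |B1| := by
        have := abs_nonneg B0; have := abs_nonneg B1
        have l0 := le_abs_self B0; have l1 := le_abs_self B1
        nlinarith [ht.1, ht.2]
      linarith
    rw [Real.norm_eq_abs, abs_of_nonneg (mul_nonneg hφt hψt)]
    exact mul_le_mul hφle hψle hψt (by positivity)
  have hIOn : IntegrableOn (fun t => φ t * ψ t) (Set.Ioo (0:ℝ) 1) volume := by
    refine ⟨(hcontφ.mul hcontψ).aestronglyMeasurable measurableSet_Ioo, ?_⟩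
    apply HasFiniteIntegral.restrict_of_bounded
      (C := (|A0| + |A1|) * (|B0| + |B1|)) (by simp)
    filter_upwards [ae_restrict_mem measurableSet_Ioo] with t ht
    exact hbound t (Set.Ioo_subset_Icc_self ht)
  have hInt : IntervalIntegrable (fun t => φ t * ψ t) volume 0 1 :=
    (intervalIntegrable_iff_integrableOn_Ioo_of_le h01).mpr hIOn
  have hInt' : IntervalIntegrable (fun t => φ (1-t) * ψ (1-t)) volume 0 1 := by
    have := (hInt.comp_sub_left 1).symm
    simpa using this
  have hIntg : IntervalIntegrable g volume 0 1 := by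
    apply Continuous.intervalIntegrable; simp only [hg]; fun_prop
  have hIntg' : IntervalIntegrable (fun t => g (1-t)) volume 0 1 := by
    have := (hIntg.comp_sub_left 1).symm
    simpa using this
  have hIntF : IntervalIntegrable F volume 0 1 := by
    simp only [hF]
    exact (((hInt.const_mul _).add (hInt'.const_mul _)).add (hIntg.const_mul _)).add
      (hIntg'.const_mul _)
  -- integrate the pointwise bound
  have key : φ (1/2) * ψ (1/2) ≤ ∫ t in (0:ℝ)..1, F t := by
    have := intervalIntegral.integral_mono_on h01
      (_root_.intervalIntegrable_const (c := φ (1/2) * ψ (1/2))) hIntF hpw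
    simpa using this
  -- compute ∫ F
  have hrefl : (∫ t in (0:ℝ)..1, φ (1-t) * ψ (1-t)) = ∫ t in (0:ℝ)..1, φ t * ψ t := by
    have := intervalIntegral.integral_comp_sub_left (fun t => φ t * ψ t) 1 (a := 0) (b := 1)
    simpa using this
  have hreflg : (∫ t in (0:ℝ)..1, g (1-t)) = ∫ t in (0:ℝ)..1, g t := by
    have := intervalIntegral.integral_comp_sub_left g 1 (a := 0) (b := 1)
    simpa using this
  have hgval : (∫ t in (0:ℝ)..1, g t)
      = (A0*B0 + A1*B1)/6 + (A0*B1 + A1*B0)/3 := by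
    have hcongr : ∀ t : ℝ, g t = A0*B1 + (A0*B0 - 2*A0*B1 + A1*B1)*t
        + (-A0*B0 + A0*B1 + A1*B0 - A1*B1)*t^2 := by
      intro t; simp only [hg]; ring
    rw [show (fun t => g t) = fun t => A0*B1 + (A0*B0 - 2*A0*B1 + A1*B1)*t
        + (-A0*B0 + A0*B1 + A1*B0 - A1*B1)*t^2 from funext hcongr,
      int_poly]
    ring
  have hFval : (∫ t in (0:ℝ)..1, F t)
      = (1/2) * (∫ t in (0:ℝ)..1, φ t * ψ t)
        + (1/12) * (A1*B1 + A0*B0) + (1/6) * (A1*B0 + A0*B1) := by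
    simp only [hF]
    rw [intervalIntegral.integral_add (((hInt.const_mul _).add (hInt'.const_mul _)).add
        (hIntg.const_mul _)) (hIntg'.const_mul _),
      intervalIntegral.integral_add ((hInt.const_mul _).add (hInt'.const_mul _))
        (hIntg.const_mul _),
      intervalIntegral.integral_add (hInt.const_mul _) (hInt'.const_mul _),
      intervalIntegral.integral_const_mul, intervalIntegral.integral_const_mul,
      intervalIntegral.integral_const_mul, intervalIntegral.integral_const_mul,
      hrefl, hreflg, hgval]
    ring
  rw [hFval] at key
  exact key
end
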